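/- arXiv:2112.00953 — 2 statements merged into one kernel-verified Lean document; each statement's English description precedes it below -/
import Mathlib

section
/- (Ideal multiple structures) Let b^{k₁}, …, b^{k_{n₀}} ∈ {0,1}^n be vectors with ‖b^{k_s}‖₁ = k_s > p, whose pairwise supports intersect in at most p coordinates. Define f(b) = 0 iff ‖b‖₁ ≤ p or b ≼ b^{k_s} for some s. Then for any coordinate i, with i_s := (b^{k_s})_i ∈ {0,1}, the weighted influence is Inf_i^q[f] = (C(n-1,p) - Σ_{s : i_s=1} C(k_s-1,p)) q^p (1-q)^{n-p-1} + Σ_{s : i_s=0} Σ_{l=p+1}^{k_s} C(k_s,l) q^l (1-q)^{n-l-1}. -/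
open Finset

/-- Hamming weight of a Boolean vector. -/
def wt {n : ℕ} (b : Fin n → Bool) : ℕ := (Finset.univ.filter fun i => b i = true).card

/-- Bernoulli(q) measure of a single vertex of the cube. -/
noncomputable def mu {n : ℕ} (q : ℝ) (b : Fin n → Bool) : ℝ :=
  q ^ wt b * (1 - q) ^ (n - wt b)

/-- Flip the `i`-th bit. -/
def bflip {n : ℕ} (i : Fin n) (b : Fin n → Bool) : Fin n → Bool :=
  Function.update b i (!(b i))

/-- Bernoulli(q) weighted influence of coordinate `i` on `f`. -/
noncomputable def Infl {n : ℕ} (q : ℝ) (f : (Fin n → Bool) → Bool) (i : Fin n) : ℝ :=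
  ∑ b : Fin n → Bool, if f b ≠ f (bflip i b) then mu q b else 0

/-- The monotone Boolean function of several structures `bs`: feasible (value 0)
iff the subset has at most `p` elements or is contained in one of the structures. -/
def fMulti {n n₀ : ℕ} (p : ℕ) (bs : Fin n₀ → Fin n → Bool) (b : Fin n → Bool) : Bool :=
  if wt b ≤ p ∨ (∃ s, ∀ i, b i ≤ bs s i) then false else true

/-!
Pairing each vertex `b` of the cube with `b` flipped at `i`, the influence becomes a sum over the
pivotal sets `A ∌ i` (feasible, while `insert i A` is not), each of weight
`q ^ #A * (1 - q) ^ (n - 1 - #A)`. By idealness a pivotal set is either a `p`-set avoiding `i` that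
lies in no structure through `i` — the `p`-subsets avoiding `i` of the structures through `i` are
pairwise distinct, which leaves `C(n-1,p) - Σ C(k_s-1,p)` of them — or a set of more than `p`
elements inside a structure avoiding `i`, and that structure is then unique.
-/

section BoolFun

variable {α : Type*} [Fintype α] [DecidableEq α]

def boolFunOrderIsoFinset : (α → Bool) ≃o Finset α where
  toFun b := univ.filter fun j => b j = true
  invFun A j := decide (j ∈ A)
  left_inv b := by funext j; simp
  right_inv A := by ext j; simp
  map_rel_iff' {b c} := by
    simp only [Equiv.coe_fn_mk, Pi.le_def, Bool.le_iff_imp, subset_iff, mem_filter, mem_univ,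
      true_and]

@[simp]
theorem mem_boolFunOrderIsoFinset {b : α → Bool} {j : α} :
    j ∈ boolFunOrderIsoFinset b ↔ b j = true := by
  simp [boolFunOrderIsoFinset]

theorem boolFunOrderIsoFinset_update_true (b : α → Bool) (i : α) :
    boolFunOrderIsoFinset (Function.update b i true) = insert i (boolFunOrderIsoFinset b) := by
  ext j
  rcases eq_or_ne j i with rfl | h <;> simp [*]

end BoolFun

section Influence

variable {n : ℕ}

theorem wt_eq_card (b : Fin n → Bool) : wt b = #(boolFunOrderIsoFinset b) := rfl

theorem wt_lt_of_apply_eq_false {b : Fin n → Bool} {i : Fin n} (hb : b i = false) : wt b < n := by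
  simpa [wt_eq_card] using
    card_lt_univ_of_notMem (s := boolFunOrderIsoFinset b) (x := i) (by simp [hb])

theorem wt_update_true {b : Fin n → Bool} {i : Fin n} (hb : b i = false) :
    wt (Function.update b i true) = wt b + 1 := by
  rw [wt_eq_card, wt_eq_card, boolFunOrderIsoFinset_update_true, card_insert_of_notMem]
  simp [hb]

theorem bflip_bflip (i : Fin n) (b : Fin n → Bool) : bflip i (bflip i b) = b := by
  funext j
  rcases eq_or_ne j i with rfl | h <;> simp [bflip, *]

theorem bflip_of_apply_eq_false {b : Fin n → Bool} {i : Fin n} (hb : b i = false) :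
    bflip i b = Function.update b i true := by
  rw [bflip, hb, Bool.not_false]

theorem mu_add_mu_update_true (q : ℝ) {b : Fin n → Bool} {i : Fin n} (hb : b i = false) :
    mu q b + mu q (Function.update b i true) = q ^ wt b * (1 - q) ^ (n - 1 - wt b) := by
  have hlt := wt_lt_of_apply_eq_false hb
  rw [mu, mu, wt_update_true hb, show n - wt b = n - 1 - wt b + 1 by omega,
    show n - (wt b + 1) = n - 1 - wt b by omega]
  ring

/-- Pairing `b` with `bflip i b`: each pivotal edge of the cube in direction `i` has total
weight `q ^ w (1 - q) ^ (n - 1 - w)`, where `w` is the weight of its lower end. -/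
theorem Infl_eq_sum_pivotal (q : ℝ) (f : (Fin n → Bool) → Bool) (i : Fin n) :
    Infl q f i = ∑ b with b i = false ∧ f b ≠ f (Function.update b i true),
      q ^ wt b * (1 - q) ^ (n - 1 - wt b) := by
  set g : (Fin n → Bool) → ℝ := fun b => if f b ≠ f (bflip i b) then mu q b else 0
  have hupper : ∑ b with ¬b i = false, g b = ∑ b with b i = false, g (bflip i b) :=
    sum_nbij' (bflip i) (bflip i) (by simp [bflip]) (by simp [bflip]) (by simp [bflip_bflip])
      (by simp [bflip_bflip]) (by simp [bflip_bflip])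
  rw [Infl, ← sum_filter_add_sum_filter_not univ (fun b => b i = false), hupper,
    ← sum_add_distrib, sum_filter, sum_filter]
  refine sum_congr rfl fun b _ => ?_
  by_cases hb : b i = false
  · have hup := bflip_of_apply_eq_false hb
    have hdown : bflip i (Function.update b i true) = b := hup ▸ bflip_bflip i b
    by_cases hf : f b = f (Function.update b i true)
    · simp [g, hb, hup, hdown, hf]
    · simp [g, hb, hup, hdown, hf, Ne.symm hf, mu_add_mu_update_true q hb]
  · simp [hb]

end Influence

section Feasible

variable {α ι : Type*}

/-- The paper's `f` vanishes exactly on the indicators of feasible sets. -/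
def Feasible (p : ℕ) (S : ι → Finset α) (A : Finset α) : Prop :=
  #A ≤ p ∨ ∃ s, A ⊆ S s

variable {p : ℕ} {S : ι → Finset α}

theorem Feasible.anti {A B : Finset α} (hBA : B ⊆ A) (hA : Feasible p S A) : Feasible p S B :=
  hA.imp (le_trans (card_le_card hBA)) fun ⟨s, hs⟩ => ⟨s, hBA.trans hs⟩

variable [DecidableEq α]

instance [Fintype ι] : DecidablePred (Feasible p S) :=
  fun _ => inferInstanceAs (Decidable (_ ∨ _))

theorem not_feasible_insert_iff {A : Finset α} {i : α} (hi : i ∉ A) :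
    ¬Feasible p S (insert i A) ↔ p ≤ #A ∧ ∀ s, i ∈ S s → ¬A ⊆ S s := by
  simp [Feasible, card_insert_of_notMem hi, insert_subset_iff]

/-- Idealness enters only as: a set of more than `p` elements lies in at most one structure. -/
theorem feasible_and_not_feasible_insert_iff
    (hS : ∀ s t, s ≠ t → #(S s ∩ S t) ≤ p) {A : Finset α} {i : α} (hi : i ∉ A) :
    Feasible p S A ∧ ¬Feasible p S (insert i A) ↔
      (#A = p ∧ ∀ s, i ∈ S s → ¬A ⊆ S s) ∨ (p < #A ∧ ∃ s, i ∉ S s ∧ A ⊆ S s) := by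
  rw [not_feasible_insert_iff hi]
  constructor
  · rintro ⟨hA | ⟨s, hs⟩, hpA, hnot⟩
    · exact .inl ⟨le_antisymm hA hpA, hnot⟩
    · rcases hpA.eq_or_lt with hp | hp
      · exact .inl ⟨hp.symm, hnot⟩
      · exact .inr ⟨hp, s, fun his => hnot s his hs, hs⟩
  · rintro (⟨hA, hnot⟩ | ⟨hp, s, his, hs⟩)
    · exact ⟨.inl hA.le, hA.ge, hnot⟩
    · refine ⟨.inr ⟨s, hs⟩, hp.le, fun t hit ht => ?_⟩
      have hst : s ≠ t := by rintro rfl; exact his hit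
      exact (card_le_card (subset_inter hs ht)).trans (hS s t hst) |>.not_gt hp

end Feasible

theorem Finset.sum_powerset_filter_lt_card {β M : Type*} [AddCommMonoid M] (x : Finset β) (p : ℕ)
    (f : ℕ → M) :
    ∑ A ∈ x.powerset with p < #A, f #A = ∑ l ∈ Icc (p + 1) #x, (#x).choose l • f l := by
  rw [sum_filter, sum_powerset_apply_card (fun m => if p < m then f m else 0)]
  simp_rw [smul_ite, smul_zero]
  rw [← sum_filter]
  congr 1
  ext l
  simp only [mem_filter, mem_range, mem_Icc]
  omega

section Counting

variable {α ι : Type*} [DecidableEq α] [Fintype ι] {p : ℕ} {S : ι → Finset α}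

theorem card_biUnion_powersetCard_erase (hS : ∀ s t, s ≠ t → #(S s ∩ S t) ≤ p) (i : α) :
    #(({s | i ∈ S s} : Finset ι).biUnion fun s => powersetCard p ((S s).erase i)) =
      ∑ s with i ∈ S s, (#(S s) - 1).choose p := by
  rw [card_biUnion]
  · refine sum_congr rfl fun s hs => ?_
    rw [card_powersetCard, card_erase_of_mem (mem_filter.mp hs).2]
  · intro s hs t ht hst
    refine disjoint_left.mpr fun A hAs hAt => ?_
    rw [mem_coe, mem_filter] at hs ht
    rw [mem_powersetCard, subset_erase] at hAs hAt
    have hsub : insert i A ⊆ S s ∩ S t :=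
      insert_subset (mem_inter.mpr ⟨hs.2, ht.2⟩) (subset_inter hAs.1.1 hAt.1.1)
    have := (card_le_card hsub).trans (hS s t hst)
    rw [card_insert_of_notMem hAs.1.2, hAs.2] at this
    omega

variable [Fintype α]

/-- The `p`-sets avoiding `i` that lie in a structure through `i` are counted once each, by
idealness. -/
theorem card_filter_add_sum_choose (hS : ∀ s t, s ≠ t → #(S s ∩ S t) ≤ p) (i : α) :
    #{A : Finset α | i ∉ A ∧ #A = p ∧ ∀ s, i ∈ S s → ¬A ⊆ S s} +
        ∑ s with i ∈ S s, (#(S s) - 1).choose p =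
      (Fintype.card α - 1).choose p := by
  have hfilter : ({A : Finset α | i ∉ A ∧ #A = p ∧ ∀ s, i ∈ S s → ¬A ⊆ S s} : Finset (Finset α)) =
      powersetCard p (univ.erase i) \
        ({s | i ∈ S s} : Finset ι).biUnion fun s => powersetCard p ((S s).erase i) := by
    ext A
    simp only [mem_filter, mem_univ, true_and, mem_sdiff, mem_powersetCard, subset_erase,
      subset_univ, mem_biUnion]
    grind
  have hsub : (({s | i ∈ S s} : Finset ι).biUnion fun s => powersetCard p ((S s).erase i)) ⊆
      powersetCard p (univ.erase i) :=
    biUnion_subset.mpr fun s _ => powersetCard_mono (erase_subset_erase i (subset_univ _))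
  rw [hfilter, ← card_biUnion_powersetCard_erase hS i, card_sdiff_add_card_eq_card hsub,
    card_powersetCard, card_erase_of_mem (mem_univ i), card_univ]

theorem sum_filter_lt_card_exists_subset (hS : ∀ s t, s ≠ t → #(S s ∩ S t) ≤ p) (i : α)
    {M : Type*} [AddCommMonoid M] (f : ℕ → M) :
    ∑ A with p < #A ∧ ∃ s, i ∉ S s ∧ A ⊆ S s, f #A =
      ∑ s with i ∉ S s, ∑ l ∈ Icc (p + 1) #(S s), (#(S s)).choose l • f l := by
  have hfilter : ({A | p < #A ∧ ∃ s, i ∉ S s ∧ A ⊆ S s} : Finset (Finset α)) =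
      ({s | i ∉ S s} : Finset ι).biUnion fun s => (S s).powerset.filter (p < #·) := by
    ext A
    simp only [mem_filter, mem_univ, true_and, mem_biUnion, mem_powerset]
    grind
  rw [hfilter, sum_biUnion]
  · exact sum_congr rfl fun s _ => sum_powerset_filter_lt_card (S s) p f
  · intro s _ t _ hst
    refine disjoint_left.mpr fun A hAs hAt => ?_
    rw [mem_filter, mem_powerset] at hAs hAt
    exact ((card_le_card (subset_inter hAs.1 hAt.1)).trans (hS s t hst)).not_gt hAs.2

theorem sum_feasible_not_feasible_insert (hS : ∀ s t, s ≠ t → #(S s ∩ S t) ≤ p) (i : α)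
    {R : Type*} [CommRing R] (w : ℕ → R) :
    ∑ A with i ∉ A ∧ Feasible p S A ∧ ¬Feasible p S (insert i A), w #A =
      (((Fintype.card α - 1).choose p : R) - ∑ s with i ∈ S s, ((#(S s) - 1).choose p : R)) *
          w p +
        ∑ s with i ∉ S s, ∑ l ∈ Icc (p + 1) #(S s), ((#(S s)).choose l : R) * w l := by
  have hsplit : ({A | i ∉ A ∧ Feasible p S A ∧ ¬Feasible p S (insert i A)} : Finset (Finset α)) =
      ({A | i ∉ A ∧ #A = p ∧ ∀ s, i ∈ S s → ¬A ⊆ S s} : Finset (Finset α)) ∪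
        ({A | p < #A ∧ ∃ s, i ∉ S s ∧ A ⊆ S s} : Finset (Finset α)) := by
    ext A
    simp only [mem_union, mem_filter, mem_univ, true_and]
    by_cases hi : i ∈ A
    · simp only [hi, not_true_eq_false, false_and, false_or, false_iff, not_and, not_exists]
      exact fun _ s his hA => his (hA hi)
    · rw [feasible_and_not_feasible_insert_iff hS hi]
      tauto
  have hdisj : Disjoint ({A | i ∉ A ∧ #A = p ∧ ∀ s, i ∈ S s → ¬A ⊆ S s} : Finset (Finset α))
      ({A | p < #A ∧ ∃ s, i ∉ S s ∧ A ⊆ S s} : Finset (Finset α)) :=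
    disjoint_filter.mpr fun A _ hA hA' => hA'.1.ne' hA.2.1
  have hsmall : ∑ A with i ∉ A ∧ #A = p ∧ ∀ s, i ∈ S s → ¬A ⊆ S s, w #A =
      #{A : Finset α | i ∉ A ∧ #A = p ∧ ∀ s, i ∈ S s → ¬A ⊆ S s} • w p :=
    (sum_congr rfl fun A hA => by rw [(mem_filter.mp hA).2.2.1]).trans (sum_const _)
  have hcount : (#{A : Finset α | i ∉ A ∧ #A = p ∧ ∀ s, i ∈ S s → ¬A ⊆ S s} : R) +
      ∑ s with i ∈ S s, ((#(S s) - 1).choose p : R) = (Fintype.card α - 1).choose p := by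
    simpa only [Nat.cast_add, Nat.cast_sum] using
      congrArg (Nat.cast (R := R)) (card_filter_add_sum_choose hS i)
  rw [hsplit, sum_union hdisj, hsmall, sum_filter_lt_card_exists_subset hS i, nsmul_eq_mul,
    ← eq_sub_of_add_eq hcount]
  simp only [nsmul_eq_mul]

end Counting

section Structures

variable {n n₀ : ℕ} (p : ℕ) (bs : Fin n₀ → Fin n → Bool)

theorem fMulti_eq_false_iff (b : Fin n → Bool) :
    fMulti p bs b = false ↔
      Feasible p (fun s => boolFunOrderIsoFinset (bs s)) (boolFunOrderIsoFinset b) := by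
  have hle : (∃ s, ∀ j, b j ≤ bs s j) ↔
      ∃ s, boolFunOrderIsoFinset b ⊆ boolFunOrderIsoFinset (bs s) :=
    exists_congr fun s => by rw [← Pi.le_def, ← OrderIso.le_iff_le boolFunOrderIsoFinset]
  rw [fMulti, Feasible, ← wt_eq_card, ← hle]
  split_ifs with h <;> simp [h]

theorem fMulti_ne_fMulti_update_iff {b : Fin n → Bool} {i : Fin n} :
    fMulti p bs b ≠ fMulti p bs (Function.update b i true) ↔
      Feasible p (fun s => boolFunOrderIsoFinset (bs s)) (boolFunOrderIsoFinset b) ∧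
        ¬Feasible p (fun s => boolFunOrderIsoFinset (bs s))
          (insert i (boolFunOrderIsoFinset b)) := by
  have hb := fMulti_eq_false_iff p bs b
  have hupd := fMulti_eq_false_iff p bs (Function.update b i true)
  rw [boolFunOrderIsoFinset_update_true] at hupd
  have hanti := Feasible.anti (p := p) (S := fun s => boolFunOrderIsoFinset (bs s))
    (subset_insert i (boolFunOrderIsoFinset b))
  generalize fMulti p bs b = x at hb ⊢
  generalize fMulti p bs (Function.update b i true) = y at hupd ⊢
  cases x <;> cases y <;> simp only [ne_eq, not_true_eq_false, Bool.false_eq_true, false_iff,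
    true_iff, reduceCtorEq, not_false_eq_true] at hb hupd ⊢ <;> tauto

end Structures

theorem ideal_multi_influence_general {n n₀ p : ℕ} (k : Fin n₀ → ℕ)
    (q : ℝ)
    (bs : Fin n₀ → Fin n → Bool) (hwt : ∀ s, wt (bs s) = k s)
    (hideal : ∀ s t, s ≠ t →
      (Finset.univ.filter fun i => bs s i = true ∧ bs t i = true).card ≤ p)
    (i : Fin n) :
    Infl q (fMulti p bs) i =
      (((n - 1).choose p : ℝ) -
          ∑ s ∈ Finset.univ.filter fun s => bs s i = true, ((k s - 1).choose p : ℝ)) *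
        q ^ p * (1 - q) ^ (n - p - 1) +
      ∑ s ∈ Finset.univ.filter fun s => bs s i = false,
        ∑ l ∈ Finset.Icc (p + 1) (k s), ((k s).choose l : ℝ) * q ^ l * (1 - q) ^ (n - l - 1) := by
  set S := fun s => boolFunOrderIsoFinset (bs s)
  have hS : ∀ s t, s ≠ t → #(S s ∩ S t) ≤ p := fun s t hst => by
    convert hideal s t hst using 2
    ext j
    simp [S]
  have hpivotal : Infl q (fMulti p bs) i =
      ∑ A with i ∉ A ∧ Feasible p S A ∧ ¬Feasible p S (insert i A),
        q ^ #A * (1 - q) ^ (n - 1 - #A) := by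
    rw [Infl_eq_sum_pivotal]
    refine sum_equiv boolFunOrderIsoFinset.toEquiv (fun b => ?_) fun _ _ => rfl
    simp [fMulti_ne_fMulti_update_iff, S]
  rw [hpivotal, sum_feasible_not_feasible_insert hS i fun l => q ^ l * (1 - q) ^ (n - 1 - l)]
  simp only [S, ← wt_eq_card, hwt, Fintype.card_fin, mem_boolFunOrderIsoFinset, Bool.not_eq_true,
    mul_assoc, Nat.sub_right_comm n 1]

theorem ideal_multi_influence {n n₀ p : ℕ} (k : Fin n₀ → ℕ)
    (hpk : ∀ s, p < k s) (hkn : ∀ s, k s < n)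
    (q : ℝ) (hq : q ∈ Set.Ioo (0:ℝ) 1)
    (bs : Fin n₀ → Fin n → Bool) (hwt : ∀ s, wt (bs s) = k s)
    (hideal : ∀ s t, s ≠ t →
      (Finset.univ.filter fun i => bs s i = true ∧ bs t i = true).card ≤ p)
    (i : Fin n) :
    Infl q (fMulti p bs) i =
      (((n - 1).choose p : ℝ) -
          ∑ s ∈ Finset.univ.filter fun s => bs s i = true, ((k s - 1).choose p : ℝ)) *
        q ^ p * (1 - q) ^ (n - p - 1) +
      ∑ s ∈ Finset.univ.filter fun s => bs s i = false,
        ∑ l ∈ Finset.Icc (p + 1) (k s), ((k s).choose l : ℝ) * q ^ l * (1 - q) ^ (n - l - 1) :=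
  ideal_multi_influence_general k q bs hwt hideal i
end

section
/- (Two-structure non-ideal case, influence of a pure outlier) With f(b) = 0 iff ‖b‖₁ ≤ p or b ≼ b^{k₁} or b ≼ b^{k₂}, where the supports of b^{k₁}, b^{k₂} intersect in exactly α₁ > p coordinates, for a coordinate i outside both supports: Inf_i^q[f] = C(n-1,p) q^p (1-q)^{n-p-1} + Σ_{l=p+1}^{k₁} C(k₁,l) q^l (1-q)^{n-l-1} + Σ_{l=p+1}^{k₂} C(k₂,l) q^l (1-q)^{n-l-1} - Σ_{l=p+1}^{α₁} C(α₁,l) q^l (1-q)^{n-l-1}. -/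
open Finset

/-- The monotone Boolean function of two (possibly overlapping) structures. -/
def fTwo {n : ℕ} (p : ℕ) (b1 b2 : Fin n → Bool) (b : Fin n → Bool) : Bool :=
  if wt b ≤ p ∨ (∀ i, b i ≤ b1 i) ∨ (∀ i, b i ≤ b2 i) then false else true

lemma bflip_invol {n : ℕ} (i : Fin n) : Function.Involutive (bflip (n := n) i) := by
  intro b; funext j
  by_cases h : j = i <;> simp [bflip, Function.update, h]

lemma bflip_apply_self {n : ℕ} (i : Fin n) (b : Fin n → Bool) : bflip i b i = !(b i) := by
  simp [bflip]

lemma wt_bflip {n : ℕ} (i : Fin n) (b : Fin n → Bool) (h : b i = false) :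
    wt (bflip i b) = wt b + 1 := by
  unfold wt
  have : (Finset.univ.filter fun j => bflip i b j = true)
      = insert i (Finset.univ.filter fun j => b j = true) := by
    ext j
    by_cases hj : j = i <;> simp [bflip, Function.update, hj, h]
  rw [this, card_insert_of_notMem (by simp [h])]

lemma wt_le {n : ℕ} (i : Fin n) (b : Fin n → Bool) (h : b i = false) :
    wt b ≤ n - 1 := by
  unfold wt
  have hsub : (Finset.univ.filter fun j => b j = true) ⊆ Finset.univ.erase i := by
    intro j hj
    simp only [mem_filter] at hj
    refine mem_erase.2 ⟨?_, mem_univ _⟩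
    rintro rfl; rw [h] at hj; exact Bool.false_ne_true hj.2
  have := card_le_card hsub
  simpa [card_erase_of_mem, card_univ] using this

lemma sum_pow_subset {n : ℕ} (A : Finset (Fin n)) (w : ℕ → ℝ) (P : ℕ → Prop) [DecidablePred P] :
    (∑ S : Finset (Fin n), if S ⊆ A ∧ P S.card then w S.card else 0)
      = ∑ l ∈ (range (A.card + 1)).filter P, (A.card.choose l : ℝ) * w l := by
  have h1 : (∑ S : Finset (Fin n), if S ⊆ A ∧ P S.card then w S.card else 0)
      = ∑ S ∈ A.powerset, (if P S.card then w S.card else 0) := by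
    rw [← Finset.sum_subset (subset_univ A.powerset)]
    · apply Finset.sum_congr rfl
      intro S hS
      rw [mem_powerset] at hS
      simp [hS]
    · intro S _ hS
      rw [mem_powerset] at hS
      simp [hS]
  rw [h1, sum_powerset_apply_card (fun l => if P l then w l else 0)]
  simp only [smul_ite, smul_zero, nsmul_eq_mul]
  rw [← Finset.sum_filter]

lemma pairing {n : ℕ} (q : ℝ) (f : (Fin n → Bool) → Bool) (i : Fin n) :
    Infl q f i = ∑ b : Fin n → Bool, if b i = false then
      (if f b ≠ f (bflip i b) then mu q b + mu q (bflip i b) else 0) else 0 := by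
  unfold Infl
  have h2 : ∀ b : Fin n → Bool, (if f b ≠ f (bflip i b) then mu q b else 0) =
      (if b i = false then (if f b ≠ f (bflip i b) then mu q b else 0) else 0)
      + (if b i = true then (if f b ≠ f (bflip i b) then mu q b else 0) else 0) := by
    intro b; cases hb : b i <;> simp
  rw [Finset.sum_congr rfl (fun b _ => h2 b), Finset.sum_add_distrib]
  have h3 : (∑ b : Fin n → Bool, if b i = true then (if f b ≠ f (bflip i b) then mu q b else 0) else 0)
      = ∑ b : Fin n → Bool, if b i = false then (if f b ≠ f (bflip i b) then mu q (bflip i b) else 0) else 0 := by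
    rw [← Equiv.sum_comp ((bflip_invol (n := n) i).toPerm _)
      (fun b => if b i = true then (if f b ≠ f (bflip i b) then mu q b else 0) else 0)]
    apply Finset.sum_congr rfl
    intro b _
    have hinv : bflip i (bflip i b) = b := bflip_invol i b
    cases hb : b i <;>
      simp [Function.Involutive.coe_toPerm, bflip_apply_self, hinv, hb, ne_comm]
  rw [h3, ← Finset.sum_add_distrib]
  apply Finset.sum_congr rfl
  intro b _
  by_cases hb : b i = false <;> by_cases hf : f b ≠ f (bflip i b) <;> simp [hb, hf]

def fsEquiv (n : ℕ) : Finset (Fin n) ≃ (Fin n → Bool) where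
  toFun S j := decide (j ∈ S)
  invFun b := Finset.univ.filter fun j => b j = true
  left_inv S := by ext j; simp
  right_inv b := by funext j; simp

lemma wt_fsEquiv {n : ℕ} (S : Finset (Fin n)) : wt (fsEquiv n S) = S.card := by
  unfold wt fsEquiv; simp

lemma le_fsEquiv {n : ℕ} (S : Finset (Fin n)) (c : Fin n → Bool) :
    (∀ j, fsEquiv n S j ≤ c j) ↔ S ⊆ Finset.univ.filter fun j => c j = true := by
  constructor
  · intro h j hj
    have := h j
    simp only [fsEquiv, Equiv.coe_fn_mk, decide_eq_true hj] at this
    simp only [mem_filter, mem_univ, true_and]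
    cases hc : c j
    · rw [hc] at this; exact absurd this (by simp)
    · rfl
  · intro h j
    by_cases hj : j ∈ S
    · have := h hj
      simp only [mem_filter] at this
      simp [fsEquiv, hj, this.2]
    · simp [fsEquiv, hj]

theorem nonideal_two_outlier_influence {n p k₁ k₂ α₁ : ℕ}
    (hpa : p + 1 ≤ α₁) (ha₁ : α₁ < k₁) (ha₂ : α₁ < k₂) (hk₁ : k₁ < n) (hk₂ : k₂ < n)
    (q : ℝ) (hq : q ∈ Set.Ioo (0:ℝ) 1)
    (b1 b2 : Fin n → Bool) (hw1 : wt b1 = k₁) (hw2 : wt b2 = k₂)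
    (hover : (Finset.univ.filter fun i => b1 i = true ∧ b2 i = true).card = α₁)
    (i : Fin n) (hi1 : b1 i = false) (hi2 : b2 i = false) :
    Infl q (fTwo p b1 b2) i =
      ((n - 1).choose p : ℝ) * q ^ p * (1 - q) ^ (n - p - 1) +
        (∑ l ∈ Finset.Icc (p + 1) k₁, (k₁.choose l : ℝ) * q ^ l * (1 - q) ^ (n - l - 1)) +
        (∑ l ∈ Finset.Icc (p + 1) k₂, (k₂.choose l : ℝ) * q ^ l * (1 - q) ^ (n - l - 1)) -
        (∑ l ∈ Finset.Icc (p + 1) α₁, (α₁.choose l : ℝ) * q ^ l * (1 - q) ^ (n - l - 1)) := by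
  classical
  set A : Finset (Fin n) := Finset.univ.filter (fun j => b1 j = true) with hAdef
  set B : Finset (Fin n) := Finset.univ.filter (fun j => b2 j = true) with hBdef
  have hAcard : A.card = k₁ := by unfold wt at hw1; exact hw1
  have hBcard : B.card = k₂ := by unfold wt at hw2; exact hw2
  have hABcard : (A ∩ B).card = α₁ := by
    rw [← hover]; congr 1; ext j; simp [hAdef, hBdef]
  have hiA : i ∉ A := by simp [hAdef, hi1]
  have hiB : i ∉ B := by simp [hBdef, hi2]
  set w : ℕ → ℝ := fun l => q ^ l * (1 - q) ^ (n - l - 1) with hwdef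
  -- per-vertex evaluation
  have key : ∀ b : Fin n → Bool, b i = false →
      (if fTwo p b1 b2 b ≠ fTwo p b1 b2 (bflip i b) then mu q b + mu q (bflip i b) else 0)
      = if (p ≤ wt b ∧ (wt b ≤ p ∨ (∀ j, b j ≤ b1 j) ∨ (∀ j, b j ≤ b2 j))) then w (wt b) else 0 := by
    intro b hb
    have hwle := wt_le i b hb
    have hwtf := wt_bflip i b hb
    have hnotle1 : ¬ (∀ j, bflip i b j ≤ b1 j) := by
      intro h; have := h i
      rw [bflip_apply_self, hb, hi1] at this
      exact absurd this (by simp)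
    have hnotle2 : ¬ (∀ j, bflip i b j ≤ b2 j) := by
      intro h; have := h i
      rw [bflip_apply_self, hb, hi2] at this
      exact absurd this (by simp)
    have hfb' : fTwo p b1 b2 (bflip i b) = if wt b + 1 ≤ p then false else true := by
      unfold fTwo; rw [hwtf]; simp [hnotle1, hnotle2]
    have hn1 : 0 < n := i.pos
    have hmusum : mu q b + mu q (bflip i b) = w (wt b) := by
      unfold mu; rw [hwtf]
      have h1 : n - wt b = (n - wt b - 1) + 1 := by omega
      have h2 : n - (wt b + 1) = n - wt b - 1 := by omega
      rw [h1, h2, hwdef]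
      have h3 : n - wt b - 1 = n - wt b - 1 := rfl
      show q ^ wt b * (1 - q) ^ (n - wt b - 1 + 1) + q ^ (wt b + 1) * (1 - q) ^ (n - wt b - 1)
        = q ^ wt b * (1 - q) ^ (n - wt b - 1)
      rw [pow_succ (1 - q), pow_succ q]; ring
    by_cases hcase : wt b + 1 ≤ p
    · have hfb : fTwo p b1 b2 b = false := by
        unfold fTwo; rw [if_pos (Or.inl (by omega))]
      rw [hfb, hfb', if_pos hcase]
      have hc : ¬ (p ≤ wt b ∧ (wt b ≤ p ∨ (∀ j, b j ≤ b1 j) ∨ (∀ j, b j ≤ b2 j))) :=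
        fun ⟨h, _⟩ => by omega
      simp [hc]
    · have hple : p ≤ wt b := by omega
      have hb'true : fTwo p b1 b2 (bflip i b) = true := by rw [hfb', if_neg hcase]
      by_cases hC : wt b ≤ p ∨ (∀ j, b j ≤ b1 j) ∨ (∀ j, b j ≤ b2 j)
      · have hfb : fTwo p b1 b2 b = false := by unfold fTwo; rw [if_pos hC]
        rw [hfb, hb'true, if_pos (by simp), if_pos ⟨hple, hC⟩, hmusum]
      · have hfb : fTwo p b1 b2 b = true := by unfold fTwo; rw [if_neg hC]
        rw [hfb, hb'true]
        simp [hC]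
  rw [pairing]
  -- transfer to finsets
  have hsum1 : (∑ b : Fin n → Bool, if b i = false then
        (if fTwo p b1 b2 b ≠ fTwo p b1 b2 (bflip i b) then mu q b + mu q (bflip i b) else 0) else 0)
      = ∑ S : Finset (Fin n),
          if i ∉ S ∧ p ≤ S.card ∧ (S.card ≤ p ∨ S ⊆ A ∨ S ⊆ B) then w S.card else 0 := by
    rw [← Equiv.sum_comp (fsEquiv n) (fun b => if b i = false then
        (if fTwo p b1 b2 b ≠ fTwo p b1 b2 (bflip i b) then mu q b + mu q (bflip i b) else 0) else 0)]
    apply Finset.sum_congr rfl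
    intro S _
    by_cases hiS : i ∈ S
    · have h1 : fsEquiv n S i = true := by simp [fsEquiv, hiS]
      simp [h1, hiS]
    · have h1 : fsEquiv n S i = false := by simp [fsEquiv, hiS]
      show (if fsEquiv n S i = false then _ else 0) = _
      rw [if_pos h1, key _ h1, wt_fsEquiv]
      have hcond : (p ≤ S.card ∧ (S.card ≤ p ∨ (∀ j, fsEquiv n S j ≤ b1 j) ∨ (∀ j, fsEquiv n S j ≤ b2 j)))
          ↔ (i ∉ S ∧ p ≤ S.card ∧ (S.card ≤ p ∨ S ⊆ A ∨ S ⊆ B)) := by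
        rw [le_fsEquiv S b1, le_fsEquiv S b2]
        exact ⟨fun h => ⟨hiS, h⟩, fun h => h.2⟩
      exact if_congr hcond rfl rfl
  rw [hsum1]
  -- pointwise inclusion-exclusion split
  have hsplit : ∀ S : Finset (Fin n),
      (if i ∉ S ∧ p ≤ S.card ∧ (S.card ≤ p ∨ S ⊆ A ∨ S ⊆ B) then w S.card else 0)
      = ((if S ⊆ Finset.univ.erase i ∧ S.card = p then w S.card else 0)
        + (if S ⊆ A ∧ p < S.card then w S.card else 0)
        + (if S ⊆ B ∧ p < S.card then w S.card else 0))
        - (if S ⊆ A ∩ B ∧ p < S.card then w S.card else 0) := by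
    intro S
    have hSE : S ⊆ Finset.univ.erase i ↔ i ∉ S := by
      rw [Finset.subset_erase]
      simp [Finset.subset_univ]
    have hSA_i : S ⊆ A → i ∉ S := fun h hi' => hiA (h hi')
    have hSB_i : S ⊆ B → i ∉ S := fun h hi' => hiB (h hi')
    have hSC : S ⊆ A ∩ B ↔ S ⊆ A ∧ S ⊆ B := Finset.subset_inter_iff
    rcases lt_trichotomy S.card p with h | h | h
    · rw [if_neg (fun hc => by omega), if_neg (fun hc => by omega),
        if_neg (fun hc => by omega), if_neg (fun hc => by omega),
        if_neg (fun hc => by omega)]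
      ring
    · by_cases hiS : i ∈ S
      · rw [if_neg (fun hc => hc.1 hiS), if_neg (fun hc => (hSE.1 hc.1) hiS),
          if_neg (fun hc => hSA_i hc.1 hiS), if_neg (fun hc => hSB_i hc.1 hiS),
          if_neg (fun hc => hSA_i (hSC.1 hc.1).1 hiS)]
        ring
      · rw [if_pos ⟨hiS, le_of_eq h.symm, Or.inl (le_of_eq h)⟩,
          if_pos ⟨hSE.2 hiS, h⟩, if_neg (fun hc => by omega),
          if_neg (fun hc => by omega), if_neg (fun hc => by omega)]
        ring
    · rw [if_neg (fun hc : _ ∧ S.card = p => by omega)]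
      by_cases hA' : S ⊆ A <;> by_cases hB' : S ⊆ B
      · rw [if_pos ⟨hSA_i hA', le_of_lt h, Or.inr (Or.inl hA')⟩,
          if_pos ⟨hA', h⟩, if_pos ⟨hB', h⟩, if_pos ⟨hSC.2 ⟨hA', hB'⟩, h⟩]
        ring
      · rw [if_pos ⟨hSA_i hA', le_of_lt h, Or.inr (Or.inl hA')⟩,
          if_pos ⟨hA', h⟩, if_neg (fun hc => hB' hc.1),
          if_neg (fun hc => hB' (hSC.1 hc.1).2)]
        ring
      · rw [if_pos ⟨hSB_i hB', le_of_lt h, Or.inr (Or.inr hB')⟩,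
          if_neg (fun hc => hA' hc.1), if_pos ⟨hB', h⟩,
          if_neg (fun hc => hA' (hSC.1 hc.1).1)]
        ring
      · rw [if_neg (fun hc => by
            rcases hc.2.2 with h1 | h1 | h1
            · omega
            · exact hA' h1
            · exact hB' h1),
          if_neg (fun hc => hA' hc.1), if_neg (fun hc => hB' hc.1),
          if_neg (fun hc => hA' (hSC.1 hc.1).1)]
        ring
  rw [Finset.sum_congr rfl (fun S _ => hsplit S), Finset.sum_sub_distrib,
    Finset.sum_add_distrib, Finset.sum_add_distrib]
  rw [sum_pow_subset (Finset.univ.erase i) w (fun l => l = p),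
    sum_pow_subset A w (fun l => p < l), sum_pow_subset B w (fun l => p < l),
    sum_pow_subset (A ∩ B) w (fun l => p < l)]
  have hE : (Finset.univ.erase i).card = n - 1 := by
    rw [Finset.card_erase_of_mem (Finset.mem_univ i), Finset.card_univ, Fintype.card_fin]
  rw [hE, hAcard, hBcard, hABcard]
  have hpn : p < n - 1 + 1 := by omega
  have hf1 : (Finset.range (n - 1 + 1)).filter (fun l => l = p) = {p} := by
    ext l; simp only [Finset.mem_filter, Finset.mem_range, Finset.mem_singleton]; omega
  have hf2 : ∀ k : ℕ, (Finset.range (k + 1)).filter (fun l => p < l) = Finset.Icc (p + 1) k := by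
    intro k; ext l
    simp only [Finset.mem_filter, Finset.mem_range, Finset.mem_Icc]; omega
  rw [hf1, hf2 k₁, hf2 k₂, hf2 α₁, Finset.sum_singleton]
  simp only [hwdef, ← mul_assoc]
end
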